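/- Let k ≥ 1 be an integer and let Φ be as in the context. For every n ≥ 0 and 1 ≤ j ≤ k·2^n, sup{|Φ_{n,j}(x)| : x ∈ X_k, ‖x‖ ≤ 1} = sup{|Φ_{n,1}(x)| : x ∈ X_k, ‖x‖ ≤ 1}. -/

import Mathlib

/-!
At level `m` the index set `A_{n,j}` is the block `{i | i / 2^(m-n) = j / 2^(n-m)}`, so it has
`2^(m-n)` elements whatever `j` is, and a permutation `σ_m` of the level carries `A_{n,0}` onto
`A_{n,j}`. Permuting coordinates inside each level preserves the weak `ℓ^p` norms and the
coordinate sums, so `x - x ∘ σ ∈ Z_k` and `Φ (x ∘ σ) = Φ x`. Hence `x ↦ x ∘ σ` maps the unit ball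
onto itself and turns `|Φ_{n,j}|` into `|Φ_{n,0}|`.
-/

open MeasureTheory Set ENNReal

/-- The weak `L^p` "norm": `sup { (∫_B |f| dμ) / μ(B)^(1/q) }` over measurable `B`
with `0 < μ B < ∞`, computed in `ℝ≥0∞`. -/
noncomputable def wnorm {α : Type*} [MeasurableSpace α] (q : ℝ) (μ : Measure α)
    (f : α → ℝ) : ℝ≥0∞ :=
  ⨆ (B : Set α) (_ : MeasurableSet B ∧ 0 < μ B ∧ μ B < ⊤),
    (∫⁻ x in B, ENNReal.ofReal |f x| ∂μ) / μ B ^ (1 / q)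

/-- The set `{f ≠ 0}` is σ-finite for `μ`. -/
def SigmaFinSupp {α : Type*} [MeasurableSpace α] (μ : Measure α) (f : α → ℝ) : Prop :=
  ∃ s : ℕ → Set α, {x | f x ≠ 0} ⊆ (⋃ n, s n) ∧ ∀ n, μ (s n) < ⊤

/-- Membership in the weak `L^p` space. -/
def MemW {α : Type*} [MeasurableSpace α] (q : ℝ) (μ : Measure α) (f : α → ℝ) : Prop :=
  Measurable f ∧ SigmaFinSupp μ f ∧ wnorm q μ f < ⊤

/-- The ambient space of `X_k = (∑_{n≥0} ⊕ ℓ^{p,∞}(k·2^n))_{ℓ∞}`: all sequences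
`x = (x_n)` with `x_n` a `k·2^n`-tuple of reals. -/
abbrev XFull (k : ℕ) := (n : ℕ) → Fin (k * 2 ^ n) → ℝ

/-- The norm of `X_k`: `sup_n ‖x_n‖`, where `‖·‖` is the weak `ℓ^p` norm
(counting measure on `Fin (k·2^n)`). -/
noncomputable def Xnorm (q : ℝ) (k : ℕ) (x : XFull k) : ℝ≥0∞ :=
  ⨆ n, wnorm q (Measure.count : Measure (Fin (k * 2 ^ n))) (x n)

/-- Membership in `X_k`. -/
def MemX (q : ℝ) (k : ℕ) (x : XFull k) : Prop := Xnorm q k x < ⊤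

lemma two_mul_succ_lt {k n j : ℕ} (h : j < k * 2 ^ n) : 2 * j + 1 < k * 2 ^ (n + 1) := by
  rw [pow_succ, ← mul_assoc]; omega

/-- `Z_k ⊆ X_k`: elements whose coordinate sums eventually vanish. -/
def Zset (q : ℝ) (k : ℕ) : Set (XFull k) :=
  {x | MemX q k x ∧ ∃ i : ℕ, ∀ n ≥ i, ∑ j, x n j = 0}

/-- The element `u ∈ X_k`, `u_n(j) = (k·2^n)^{-1/p}`. -/
noncomputable def uElt (p : ℝ) (k : ℕ) : XFull k :=
  fun n _ => ((k : ℝ) * 2 ^ n) ^ (-(1 / p))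

/-- Coordinatewise multiplication of `x ∈ X_k` by the indicator of a set of index pairs. -/
noncomputable def chiMul {k : ℕ} (A : (m : ℕ) → Set (Fin (k * 2 ^ m))) (x : XFull k) :
    XFull k :=
  fun m => (A m).indicator (x m)

/-- The index set `A_{n,j}` (the support of `T_k χ_{[(j-1)/2^n, j/2^n]}`): pairs `(m,i)`
such that the dyadic interval of `(m,i)` meets that of `(n,j)` in positive Lebesgue
measure (all indices 0-indexed). -/
def Aset (k n : ℕ) (j : Fin (k * 2 ^ n)) : (m : ℕ) → Set (Fin (k * 2 ^ m)) :=
  fun m => {i | 0 < volume (Icc ((i : ℕ) / 2 ^ m : ℝ) (((i : ℕ) + 1) / 2 ^ m) ∩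
    Icc ((j : ℕ) / 2 ^ n : ℝ) (((j : ℕ) + 1) / 2 ^ n))}

section Wnorm

variable {α β : Type*} [MeasurableSpace α] [MeasurableSpace β] {q : ℝ} {μ : Measure α}

lemma wnorm_mono {f g : α → ℝ} (h : ∀ a, |f a| ≤ |g a|) : wnorm q μ f ≤ wnorm q μ g :=
  iSup₂_mono fun _ _ =>
    ENNReal.div_le_div_right (lintegral_mono fun a => ENNReal.ofReal_le_ofReal (h a)) _

lemma wnorm_sub_le [DiscreteMeasurableSpace α] (f g : α → ℝ) :
    wnorm q μ (f - g) ≤ wnorm q μ f + wnorm q μ g := by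
  refine iSup₂_le fun B hB => ?_
  have hint : ∫⁻ x in B, ENNReal.ofReal |f x - g x| ∂μ ≤
      (∫⁻ x in B, ENNReal.ofReal |f x| ∂μ) + ∫⁻ x in B, ENNReal.ofReal |g x| ∂μ := by
    rw [← lintegral_add_left .of_discrete]
    refine lintegral_mono fun a => ?_
    rw [← ENNReal.ofReal_add (abs_nonneg _) (abs_nonneg _)]
    exact ENNReal.ofReal_le_ofReal (abs_sub _ _)
  calc (∫⁻ x in B, ENNReal.ofReal |(f - g) x| ∂μ) / μ B ^ (1 / q)
      ≤ (∫⁻ x in B, ENNReal.ofReal |f x| ∂μ) / μ B ^ (1 / q) +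
          (∫⁻ x in B, ENNReal.ofReal |g x| ∂μ) / μ B ^ (1 / q) :=
        ENNReal.div_add_div_same ▸ ENNReal.div_le_div_right hint _
    _ ≤ wnorm q μ f + wnorm q μ g :=
        add_le_add (le_iSup₂_of_le B hB le_rfl) (le_iSup₂_of_le B hB le_rfl)

lemma wnorm_comp_measurePreserving {ν : Measure β} (e : α ≃ᵐ β) (he : MeasurePreserving e μ ν)
    (f : β → ℝ) : wnorm q μ (f ∘ e) = wnorm q ν f := by
  unfold wnorm
  rw [← (Set.preimage_surjective.2 e.injective).iSup_comp]
  refine iSup_congr fun C => ?_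
  simp only [he.measure_preimage_equiv, e.measurableSet_preimage, Function.comp_apply,
    he.setLIntegral_comp_preimage_emb e.measurableEmbedding fun b => ENNReal.ofReal |f b|]

lemma measurePreserving_count [MeasurableSingletonClass α] (e : α ≃ᵐ α) :
    MeasurePreserving e Measure.count Measure.count := by
  refine ⟨e.measurable, Measure.ext fun s hs => ?_⟩
  rw [e.map_apply, Measure.count_apply (e.measurableSet_preimage.2 hs), Measure.count_apply hs,
    ← e.image_symm, e.symm.injective.encard_image]

lemma wnorm_count_comp_perm [DiscreteMeasurableSpace α] (e : Equiv.Perm α) (f : α → ℝ) :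
    wnorm q Measure.count (f ∘ e) = wnorm q Measure.count f :=
  wnorm_comp_measurePreserving ⟨e, .of_discrete, .of_discrete⟩
    (measurePreserving_count _) f

end Wnorm

section LevelPerm

variable {q : ℝ} {k : ℕ}

def permuteLevels (σ : ∀ m, Equiv.Perm (Fin (k * 2 ^ m))) (x : XFull k) : XFull k :=
  fun m => x m ∘ σ m

lemma Xnorm_permuteLevels (σ : ∀ m, Equiv.Perm (Fin (k * 2 ^ m))) (x : XFull k) :
    Xnorm q k (permuteLevels σ x) = Xnorm q k x :=
  iSup_congr fun m => wnorm_count_comp_perm (σ m) (x m)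

lemma Xnorm_chiMul_le (A : (m : ℕ) → Set (Fin (k * 2 ^ m))) (x : XFull k) :
    Xnorm q k (chiMul A x) ≤ Xnorm q k x :=
  iSup_mono fun m => wnorm_mono fun i => by
    by_cases h : i ∈ A m <;> simp [chiMul, h]

lemma Xnorm_sub_le (x y : XFull k) : Xnorm q k (x - y) ≤ Xnorm q k x + Xnorm q k y :=
  iSup_le fun m => (wnorm_sub_le (x m) (y m)).trans <| add_le_add
    (le_iSup (fun m => wnorm q Measure.count (x m)) m)
    (le_iSup (fun m => wnorm q Measure.count (y m)) m)

lemma chiMul_permuteLevels {S T : (m : ℕ) → Set (Fin (k * 2 ^ m))}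
    {σ : ∀ m, Equiv.Perm (Fin (k * 2 ^ m))} (hST : ∀ m, S m = σ m ⁻¹' T m) (x : XFull k) :
    chiMul S (permuteLevels σ x) = permuteLevels σ (chiMul T x) := by
  funext m i
  simp only [chiMul, permuteLevels, hST, Function.comp_apply, Set.indicator_comp_right]

end LevelPerm

section Functional

variable {q : ℝ} {k : ℕ} {Φ : XFull k → ℝ}

lemma sub_mem_Zset {x y : XFull k} (hx : MemX q k x) (hy : MemX q k y)
    (h : ∀ m, ∑ i, x m i = ∑ i, y m i) : x - y ∈ Zset q k :=
  ⟨(Xnorm_sub_le x y).trans_lt (ENNReal.add_lt_top.2 ⟨hx, hy⟩), 0, fun m _ => by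
    simp [Finset.sum_sub_distrib, h m]⟩

lemma apply_eq_of_levelSums_eq
    (hΦadd : ∀ x y : XFull k, MemX q k x → MemX q k y → Φ (x + y) = Φ x + Φ y)
    (hΦZ : ∀ z ∈ Zset q k, Φ z = 0) {x y : XFull k} (hx : MemX q k x) (hy : MemX q k y)
    (h : ∀ m, ∑ i, x m i = ∑ i, y m i) : Φ x = Φ y := by
  have hxy := sub_mem_Zset hx hy h
  calc Φ x = Φ (y + (x - y)) := by rw [add_sub_cancel]
    _ = Φ y + Φ (x - y) := hΦadd _ _ hy hxy.1
    _ = Φ y := by rw [hΦZ _ hxy, add_zero]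

lemma apply_permuteLevels
    (hΦadd : ∀ x y : XFull k, MemX q k x → MemX q k y → Φ (x + y) = Φ x + Φ y)
    (hΦZ : ∀ z ∈ Zset q k, Φ z = 0) (σ : ∀ m, Equiv.Perm (Fin (k * 2 ^ m))) {x : XFull k}
    (hx : MemX q k x) : Φ (permuteLevels σ x) = Φ x :=
  apply_eq_of_levelSums_eq hΦadd hΦZ ((Xnorm_permuteLevels σ x).trans_lt hx) hx fun m =>
    Equiv.sum_comp (σ m) (x m)

/-- The supremum of this set is the norm of `x ↦ Φ (χ_A x)`. -/
def unitBallAbsValues (q : ℝ) (Φ : XFull k → ℝ) (A : (m : ℕ) → Set (Fin (k * 2 ^ m))) :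
    Set ℝ :=
  {r | ∃ x : XFull k, MemX q k x ∧ Xnorm q k x ≤ 1 ∧ r = |Φ (chiMul A x)|}

lemma unitBallAbsValues_subset_of_perm
    (hΦadd : ∀ x y : XFull k, MemX q k x → MemX q k y → Φ (x + y) = Φ x + Φ y)
    (hΦZ : ∀ z ∈ Zset q k, Φ z = 0) {S T : (m : ℕ) → Set (Fin (k * 2 ^ m))}
    {σ : ∀ m, Equiv.Perm (Fin (k * 2 ^ m))} (hST : ∀ m, S m = σ m ⁻¹' T m) :
    unitBallAbsValues q Φ T ⊆ unitBallAbsValues q Φ S := by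
  rintro _ ⟨x, hx, hx1, rfl⟩
  refine ⟨permuteLevels σ x, (Xnorm_permuteLevels σ x).trans_lt hx,
    (Xnorm_permuteLevels σ x).trans_le hx1, ?_⟩
  rw [chiMul_permuteLevels hST,
    apply_permuteLevels hΦadd hΦZ σ ((Xnorm_chiMul_le T x).trans_lt hx)]

lemma Equiv.Perm.exists_preimage_eq_of_ncard_eq {α : Type*} [Finite α] {S T : Set α}
    (h : S.ncard = T.ncard) : ∃ σ : Equiv.Perm α, S = σ ⁻¹' T := by
  classical
  have := Fintype.ofFinite α
  obtain ⟨σ, hσ⟩ := Equiv.Perm.exists_map_finset_eq S.toFinset T.toFinset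
    (by rwa [← Set.ncard_eq_toFinset_card', ← Set.ncard_eq_toFinset_card'])
  refine ⟨σ, Set.ext fun a => ?_⟩
  rw [Set.mem_preimage, ← Set.mem_toFinset, ← Set.mem_toFinset (s := T), ← hσ,
    Finset.mem_map_equiv, Equiv.symm_apply_apply]

lemma unitBallAbsValues_eq_of_ncard_eq
    (hΦadd : ∀ x y : XFull k, MemX q k x → MemX q k y → Φ (x + y) = Φ x + Φ y)
    (hΦZ : ∀ z ∈ Zset q k, Φ z = 0) {S T : (m : ℕ) → Set (Fin (k * 2 ^ m))}
    (h : ∀ m, (S m).ncard = (T m).ncard) :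
    unitBallAbsValues q Φ S = unitBallAbsValues q Φ T := by
  choose σ hσ using fun m => Equiv.Perm.exists_preimage_eq_of_ncard_eq (h m)
  choose τ hτ using fun m => Equiv.Perm.exists_preimage_eq_of_ncard_eq (h m).symm
  exact (unitBallAbsValues_subset_of_perm hΦadd hΦZ hτ).antisymm
    (unitBallAbsValues_subset_of_perm hΦadd hΦZ hσ)

end Functional

section DyadicIndex

lemma Aset_mem_iff_lt {k n : ℕ} (j : Fin (k * 2 ^ n)) {m : ℕ} (i : Fin (k * 2 ^ m)) :
    i ∈ Aset k n j m ↔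
      (i : ℕ) * 2 ^ n < ((j : ℕ) + 1) * 2 ^ m ∧ (j : ℕ) * 2 ^ m < ((i : ℕ) + 1) * 2 ^ n := by
  have h2m : (0 : ℝ) < 2 ^ m := by positivity
  have h2n : (0 : ℝ) < 2 ^ n := by positivity
  simp only [Aset, mem_ofPred_eq, Set.Icc_inter_Icc, Real.volume_Icc]
  rw [ENNReal.ofReal_pos, sub_pos, lt_min_iff, max_lt_iff, max_lt_iff,
    div_lt_div_iff₀ h2m h2m, div_lt_div_iff₀ h2n h2m, div_lt_div_iff₀ h2m h2n,
    div_lt_div_iff₀ h2n h2n]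
  constructor
  · rintro ⟨⟨-, h3⟩, h2, -⟩
    exact ⟨by exact_mod_cast h2, by exact_mod_cast h3⟩
  · rintro ⟨h1, h2⟩
    exact ⟨⟨by nlinarith, by exact_mod_cast h2⟩, by exact_mod_cast h1, by nlinarith⟩

lemma Nat.lt_and_lt_iff_div_eq {i j d : ℕ} (hd : 0 < d) :
    i < (j + 1) * d ∧ j * d < i + 1 ↔ i / d = j := by
  rw [Nat.div_eq_iff hd, add_one_mul]
  omega

lemma Aset_mem_iff {k n : ℕ} (j : Fin (k * 2 ^ n)) {m : ℕ} (i : Fin (k * 2 ^ m)) :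
    i ∈ Aset k n j m ↔ (i : ℕ) / 2 ^ (m - n) = (j : ℕ) / 2 ^ (n - m) := by
  rw [Aset_mem_iff_lt]
  have hd : ∀ d, 0 < 2 ^ d := fun d => Nat.two_pow_pos d
  rcases le_total n m with h | h
  · obtain ⟨d, rfl⟩ := Nat.exists_eq_add_of_le h
    simp only [Nat.add_sub_cancel_left, Nat.sub_eq_zero_of_le h, pow_zero, Nat.div_one, pow_add]
    rw [mul_comm (2 ^ n), ← mul_assoc, ← mul_assoc, Nat.mul_lt_mul_right (hd n),
      Nat.mul_lt_mul_right (hd n), Nat.lt_and_lt_iff_div_eq (hd d)]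
  · obtain ⟨d, rfl⟩ := Nat.exists_eq_add_of_le h
    simp only [Nat.add_sub_cancel_left, Nat.sub_eq_zero_of_le h, pow_zero, Nat.div_one, pow_add]
    rw [mul_comm (2 ^ m), ← mul_assoc, ← mul_assoc, Nat.mul_lt_mul_right (hd m),
      Nat.mul_lt_mul_right (hd m), and_comm, Nat.lt_and_lt_iff_div_eq (hd d), eq_comm]

lemma Fin.ncard_setOf_div_eq {N d c : ℕ} (hd : 0 < d) (hN : (c + 1) * d ≤ N) :
    {i : Fin N | (i : ℕ) / d = c}.ncard = d := by
  rw [← Set.ncard_image_of_injective _ Fin.val_injective]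
  have : Fin.val '' {i : Fin N | (i : ℕ) / d = c} = Set.Ico (c * d) ((c + 1) * d) := by
    ext i
    simp only [Set.mem_image, Set.mem_ofPred_eq, Set.mem_Ico, Nat.div_eq_iff hd]
    constructor
    · rintro ⟨i, hi, rfl⟩
      rw [add_one_mul]; omega
    · intro hi
      exact ⟨⟨i, hi.2.trans_le hN⟩, by rw [add_one_mul] at hi; dsimp only; omega, rfl⟩
  rw [this, Set.ncard_Ico_nat, add_one_mul, Nat.add_sub_cancel_left]

lemma Nat.div_two_pow_add_one_mul_two_pow_le {k n m j : ℕ} (hj : j < k * 2 ^ n) :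
    (j / 2 ^ (n - m) + 1) * 2 ^ (m - n) ≤ k * 2 ^ m := by
  rcases le_total n m with h | h
  · obtain ⟨d, rfl⟩ := Nat.exists_eq_add_of_le h
    simp only [Nat.add_sub_cancel_left, Nat.sub_eq_zero_of_le h, pow_zero, Nat.div_one, pow_add,
      ← mul_assoc]
    exact Nat.mul_le_mul_right _ hj
  · obtain ⟨d, rfl⟩ := Nat.exists_eq_add_of_le h
    simp only [Nat.add_sub_cancel_left, Nat.sub_eq_zero_of_le h, pow_zero, mul_one, pow_add,
      ← mul_assoc] at hj ⊢
    exact (Nat.div_lt_iff_lt_mul (Nat.two_pow_pos d)).2 hj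

lemma ncard_Aset {k n : ℕ} (j : Fin (k * 2 ^ n)) (m : ℕ) :
    (Aset k n j m).ncard = 2 ^ (m - n) := by
  simp_rw [Set.ext fun i => Aset_mem_iff j (m := m) i]
  exact Fin.ncard_setOf_div_eq (Nat.two_pow_pos _) (Nat.div_two_pow_add_one_mul_two_pow_le j.2)

end DyadicIndex

/-- Indices are 0-based: `j = 0` is the paper's `Φ_{n,1}`. -/
theorem Phi_nj_norms_equal (q : ℝ)
    (k : ℕ) (hk : 1 ≤ k)
    (Φ : XFull k → ℝ)
    (hΦadd : ∀ x y : XFull k, MemX q k x → MemX q k y → Φ (x + y) = Φ x + Φ y)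
    (hΦZ : ∀ z ∈ Zset q k, Φ z = 0)
    (n : ℕ) (j : Fin (k * 2 ^ n)) :
    sSup {r : ℝ | ∃ x : XFull k, MemX q k x ∧ Xnorm q k x ≤ 1 ∧
        r = |Φ (chiMul (Aset k n j) x)|} =
    sSup {r : ℝ | ∃ x : XFull k, MemX q k x ∧ Xnorm q k x ≤ 1 ∧
        r = |Φ (chiMul (Aset k n ⟨0, by positivity⟩) x)|} :=
  congrArg sSup <| unitBallAbsValues_eq_of_ncard_eq hΦadd hΦZ fun m => by
    rw [ncard_Aset, ncard_Aset]
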